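/- arXiv:0812.2242 — 7 statements merged into one kernel-verified Lean document; each statement's English description precedes it below -/
import Mathlib

section
/- Let n ≥ 1, let σ be a permutation of Fin n (label i is placed in locker σ(i), so locker x contains label σ⁻¹(x)), and let i : Fin n. Define the pointer-following sequence a : ℕ → Fin n by a 0 = i and a (j+1) = σ⁻¹ (a j) (the player first opens locker i and then always opens the locker whose number equals the label just revealed). Then for every m ≥ 1, the label i appears among the contents of the first m opened lockers, i.e. σ(i) ∈ {a 0, a 1, …, a (m-1)}, if and only if the length of the cycle of σ containing i is at most m. -/
/-! The pointer-following sequence is `a j = σ⁻¹^j i`, so `a j = σ i` exactly when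
`σ^(j+1) i = i`, i.e. when the cycle length `d` of `i` divides `j + 1`. The label is therefore
first found at step `j = d - 1`, and `d` is the number of distinct points `σ^k i`. -/

/-- The orbit (cycle) of `i` under the permutation `σ` of `Fin n`, as a finset.
For `n ≥ 1` the powers `σ^0, …, σ^(n-1)` applied to `i` exhaust the orbit. -/
def cycleOf {n : ℕ} (σ : Equiv.Perm (Fin n)) (i : Fin n) : Finset (Fin n) :=
  (Finset.range n).image (fun k => (σ ^ k) i)

open Finset Function

theorem Function.eq_iterate_of_map_succ {α : Type*} {f : α → α} {a : ℕ → α}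
    (h : ∀ j, a (j + 1) = f (a j)) (j : ℕ) : a j = f^[j] (a 0) := by
  induction j with
  | zero => rfl
  | succ j ih => rw [h, ih, iterate_succ_apply']

theorem Function.card_image_range_iterate {α : Type*} [DecidableEq α] {f : α → α} {x : α}
    (hx : x ∈ periodicPts f) {N : ℕ} (hN : minimalPeriod f x ≤ N) :
    ((range N).image (f^[·] x)).card = minimalPeriod f x := by
  have hpos := minimalPeriod_pos_of_mem_periodicPts hx
  have hsame : (range N).image (f^[·] x) = (range (minimalPeriod f x)).image (f^[·] x) :=
    Subset.antisymm
      (image_subset_iff.2 fun k _ =>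
        mem_image.2 ⟨k % minimalPeriod f x, mem_range.2 (Nat.mod_lt k hpos),
          iterate_mod_minimalPeriod_eq⟩)
      (image_subset_image (range_subset_range.2 hN))
  rw [hsame, card_image_of_injOn, card_range]
  intro k hk l hl hkl
  exact iterate_injOn_Iio_minimalPeriod (by simpa using hk) (by simpa using hl) hkl

theorem Equiv.Perm.iterate_apply_eq_iff_eq_symm_iterate {α : Type*} (σ : Equiv.Perm α)
    (j : ℕ) (x y : α) : σ^[j] x = y ↔ x = σ.symm^[j] y :=
  ⟨fun h => h ▸ (σ.left_inv.iterate j x).symm, fun h => h ▸ σ.right_inv.iterate j y⟩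

theorem Equiv.Perm.symm_iterate_eq_apply_iff {α : Type*} (σ : Equiv.Perm α) (j : ℕ) (x : α) :
    σ.symm^[j] x = σ x ↔ IsPeriodicPt σ (j + 1) x := by
  rw [IsPeriodicPt, IsFixedPt, iterate_succ_apply,
    σ.iterate_apply_eq_iff_eq_symm_iterate, eq_comm]

theorem Equiv.Perm.mem_image_range_symm_iterate_iff {α : Type*} [DecidableEq α]
    {σ : Equiv.Perm α} {x : α} (hx : x ∈ periodicPts σ) (m : ℕ) :
    σ x ∈ (range m).image (σ.symm^[·] x) ↔ minimalPeriod σ x ≤ m := by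
  have hpos := minimalPeriod_pos_of_mem_periodicPts hx
  simp only [mem_image, mem_range, σ.symm_iterate_eq_apply_iff,
    isPeriodicPt_iff_minimalPeriod_dvd]
  constructor
  · rintro ⟨j, hjm, hdvd⟩
    exact (Nat.le_of_dvd j.succ_pos hdvd).trans hjm
  · intro hm
    exact ⟨minimalPeriod σ x - 1, by omega, by rw [Nat.sub_add_cancel hpos]⟩

theorem card_cycleOf {n : ℕ} (σ : Equiv.Perm (Fin n)) (i : Fin n) :
    (cycleOf σ i).card = minimalPeriod σ i := by
  simp only [cycleOf, ← Equiv.Perm.iterate_eq_pow]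
  exact card_image_range_iterate (σ.injective.mem_periodicPts i)
    (minimalPeriod_le_card.trans_eq (Fintype.card_fin n))

theorem locker_pointer_following_win_iff_cycle_le_general
    (n : ℕ) (σ : Equiv.Perm (Fin n)) (i : Fin n)
    (a : ℕ → Fin n) (ha0 : a 0 = i) (haS : ∀ j, a (j + 1) = σ.symm (a j))
    (m : ℕ) :
    σ i ∈ (Finset.range m).image a ↔ (cycleOf σ i).card ≤ m := by
  have ha : a = (σ.symm^[·] i) := funext fun j => ha0 ▸ eq_iterate_of_map_succ haS j
  rw [ha, card_cycleOf, σ.mem_image_range_symm_iterate_iff (σ.injective.mem_periodicPts i)]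

/-- In the locker puzzle with `n` lockers, label `i` is in locker `σ i`, so locker `x`
contains label `σ⁻¹ x`.  Player `i` uses the pointer-following strategy
`a 0 = i`, `a (j+1) = σ⁻¹ (a j)`.  For every `m ≥ 1`, the label `i` appears among the
contents of the first `m` opened lockers (equivalently `σ i` is among the first `m`
opened lockers) if and only if the cycle of `σ` containing `i` has length at most `m`. -/
theorem locker_pointer_following_win_iff_cycle_le
    (n : ℕ) (hn : 1 ≤ n) (σ : Equiv.Perm (Fin n)) (i : Fin n)
    (a : ℕ → Fin n) (ha0 : a 0 = i) (haS : ∀ j, a (j + 1) = σ.symm (a j))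
    (m : ℕ) (hm : 1 ≤ m) :
    σ i ∈ (Finset.range m).image a ↔ (cycleOf σ i).card ≤ m :=
  locker_pointer_following_win_iff_cycle_le_general n σ i a ha0 haS m
end

section
/- For every n ≥ 1 and every natural number k with n/2 < k ≤ n, the number of permutations of Fin n that contain a cycle of length exactly k equals n!/k. -/
open Finset Nat

theorem Nat.factorial_pred_mul_choose_mul_factorial {n k : ℕ} (hk : 0 < k) (hkn : k ≤ n) :
    (k - 1)! * n.choose k * (n - k)! = n ! / k := by
  refine (Nat.div_eq_of_eq_mul_left hk ?_).symm
  rw [← choose_mul_factorial_mul_factorial hkn, ← mul_factorial_pred hk.ne']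
  ring

namespace Equiv.Perm

variable {α : Type*} [Fintype α] [DecidableEq α]

theorem card_filter_forall_mem_apply_eq (g : Perm α) (s : Finset α) :
    #{σ : Perm α | ∀ a ∈ s, σ a = g a} = (Fintype.card α - #s)! := by
  have hfix : #{τ : Perm α | ∀ a ∈ s, τ a = a} = (Fintype.card α - #s)! := by
    rw [← Fintype.card_subtype, ← card_compl, ← Fintype.card_coe sᶜ, ← Fintype.card_perm]
    exact Fintype.card_congr ((Perm.subtypeEquivSubtypePerm (· ∈ sᶜ)).trans
      (Equiv.subtypeEquivRight (by simp))).symm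
  rw [← hfix]
  refine card_bij' (fun σ _ => g⁻¹ * σ) (fun τ _ => g * τ) ?_ ?_ (by simp) (by simp)
  · simp +contextual
  · simp +contextual

theorem card_filter_mem_cycleFactorsFinset {c : Perm α} (hc : c.IsCycle) :
    #{σ : Perm α | c ∈ σ.cycleFactorsFinset} = (Fintype.card α - #c.support)! := by
  simp only [mem_cycleFactorsFinset_iff, hc, true_and, @eq_comm _ (c _)]
  exact card_filter_forall_mem_apply_eq c c.support

theorem eq_of_mem_cycleFactorsFinset_of_card_lt {σ c d : Perm α}
    (hc : c ∈ σ.cycleFactorsFinset) (hd : d ∈ σ.cycleFactorsFinset)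
    (hcard : Fintype.card α < #c.support + #d.support) : c = d := by
  by_contra hne
  have hdisj := (cycleFactorsFinset_pairwise_disjoint σ hc hd hne).disjoint_support
  have := card_le_univ (c.support ∪ d.support)
  rw [card_union_of_disjoint hdisj] at this
  omega

theorem mem_cycleType_iff_exists_mem_cycleFactorsFinset {σ : Perm α} {k : ℕ} :
    k ∈ σ.cycleType ↔ ∃ c ∈ σ.cycleFactorsFinset, #c.support = k := by
  simp [cycleType_def]

theorem card_filter_mem_cycleType {k : ℕ} (hk : 2 ≤ k) (hkα : k ≤ Fintype.card α)
    (hαk : Fintype.card α < 2 * k) :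
    #{σ : Perm α | k ∈ σ.cycleType} = (Fintype.card α)! / k := by
  set C : Finset (Perm α) := {c | c.cycleType = {k}}
  have hC : ∀ c ∈ C, c.IsCycle ∧ #c.support = k := fun c hc => by
    rw [mem_filter] at hc
    refine ⟨card_cycleType_eq_one.mp (by simp [hc.2]), ?_⟩
    simpa [hc.2] using (sum_cycleType c).symm
  have hunion : ({σ | k ∈ σ.cycleType} : Finset (Perm α))
      = C.biUnion fun c => {σ | c ∈ σ.cycleFactorsFinset} := by
    ext σ
    simp only [mem_filter, mem_univ, true_and, mem_biUnion, C,
      mem_cycleType_iff_exists_mem_cycleFactorsFinset]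
    refine exists_congr fun c => ⟨fun ⟨hcσ, hck⟩ => ?_, fun ⟨hck, hcσ⟩ => ?_⟩
    · exact ⟨by rw [(mem_cycleFactorsFinset_iff.mp hcσ).1.cycleType, hck], hcσ⟩
    · exact ⟨hcσ, (hC c (by simpa [C] using hck)).2⟩
  have hdisj : (C : Set (Perm α)).PairwiseDisjoint
      fun c => ({σ | c ∈ σ.cycleFactorsFinset} : Finset (Perm α)) := by
    intro c hc d hd hne
    refine disjoint_filter.mpr fun σ _ hcσ hdσ => hne ?_
    refine eq_of_mem_cycleFactorsFinset_of_card_lt hcσ hdσ ?_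
    rw [(hC c hc).2, (hC d hd).2]
    omega
  calc #{σ : Perm α | k ∈ σ.cycleType}
      = ∑ c ∈ C, #{σ : Perm α | c ∈ σ.cycleFactorsFinset} := by
        rw [hunion, card_biUnion hdisj]
    _ = ∑ _c ∈ C, (Fintype.card α - k)! := sum_congr rfl fun c hc => by
        rw [card_filter_mem_cycleFactorsFinset (hC c hc).1, (hC c hc).2]
    _ = (k - 1)! * (Fintype.card α).choose k * (Fintype.card α - k)! := by
        rw [sum_const, card_of_cycleType_singleton hk hkα, smul_eq_mul]
    _ = (Fintype.card α)! / k := factorial_pred_mul_choose_mul_factorial (by omega) hkα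

end Equiv.Perm

open Equiv

section

variable {n : ℕ} {σ : Perm (Fin n)} {i : Fin n}

theorem cycleOf_eq_singleton (hi : σ i = i) : cycleOf σ i = {i} := by
  simp only [cycleOf, Perm.pow_apply_eq_self_of_apply_eq_self hi]
  exact image_const (nonempty_range_iff.mpr (Fin.pos i).ne') i

theorem cycleOf_eq_support_cycleOf (hi : σ i ≠ i) :
    cycleOf σ i = (σ.cycleOf i).support := by
  ext y
  simp only [cycleOf, mem_image, mem_range, Perm.mem_support_cycleOf_iff' hi]
  refine ⟨fun ⟨m, _, hm⟩ => hm ▸ Perm.sameCycle_pow_right.mpr (Perm.SameCycle.refl σ i),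
    fun hy => ?_⟩
  obtain ⟨m, hm, rfl⟩ := hy.exists_pow_eq_of_mem_support (Perm.mem_support.mpr hi)
  exact ⟨m, hm.trans_le ((card_le_univ _).trans_eq (Fintype.card_fin n)), rfl⟩

theorem exists_card_cycleOf_eq_iff_mem_cycleType {k : ℕ} (hk : 2 ≤ k) :
    (∃ i, (cycleOf σ i).card = k) ↔ k ∈ σ.cycleType := by
  rw [Perm.mem_cycleType_iff_exists_mem_cycleFactorsFinset]
  constructor
  · rintro ⟨i, hik⟩
    by_cases hi : σ i = i
    · rw [cycleOf_eq_singleton hi, card_singleton] at hik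
      omega
    · rw [cycleOf_eq_support_cycleOf hi] at hik
      exact ⟨σ.cycleOf i, Perm.cycleOf_mem_cycleFactorsFinset_iff.mpr (Perm.mem_support.mpr hi),
        hik⟩
  · rintro ⟨c, hc, hck⟩
    obtain ⟨a, ha⟩ := (Perm.mem_cycleFactorsFinset_iff.mp hc).1.nonempty_support
    have hσa : σ a ≠ a := Perm.mem_support.mp (Perm.mem_cycleFactorsFinset_support_le hc ha)
    exact ⟨a, by rw [cycleOf_eq_support_cycleOf hσa, ← Perm.cycle_is_cycleOf ha hc, hck]⟩

end

theorem card_perms_with_k_cycle_general (n k : ℕ) (hk₁ : n / 2 < k) (hk₂ : k ≤ n) :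
    (Finset.univ.filter
        (fun σ : Equiv.Perm (Fin n) => ∃ i : Fin n, (cycleOf σ i).card = k)).card
      = n.factorial / k := by
  rcases (by omega : k = 1 ∨ 2 ≤ k) with rfl | hk
  · obtain rfl : n = 1 := by omega
    rw [filter_true_of_mem fun σ _ =>
      ⟨0, by rw [cycleOf_eq_singleton (Subsingleton.elim _ _), card_singleton]⟩]
    simp
  · simp only [exists_card_cycleOf_eq_iff_mem_cycleType hk]
    simpa using Perm.card_filter_mem_cycleType (α := Fin n) hk (by simpa) (by simp; omega)

/-- For `n ≥ 1` and `n/2 < k ≤ n`, the number of permutations of `Fin n` containing a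
cycle of length exactly `k` equals `n!/k`.  (Since `k > n/2`, such a cycle is unique.) -/
theorem card_perms_with_k_cycle (n k : ℕ) (hn : 1 ≤ n) (hk₁ : n / 2 < k) (hk₂ : k ≤ n) :
    (Finset.univ.filter
        (fun σ : Equiv.Perm (Fin n) => ∃ i : Fin n, (cycleOf σ i).card = k)).card
      = n.factorial / k :=
  card_perms_with_k_cycle_general n k hk₁ hk₂
end

section
/- Let n be a positive even natural number. If σ is chosen uniformly at random among the permutations of Fin n and each player i uses the pointer-following strategy with n/2 openings, then the probability that all n players win equals 1 − ∑_{k=1}^{n/2} 1/(n/2 + k). -/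
/-!
Player `i` finds his label exactly when the cycle of `σ` through `i` has length at most `n / 2`,
so the team loses iff `σ` has a cycle of some length `m > n / 2`. A permutation has at most one
such cycle, as it covers more than half of the points. Double counting the pairs `(σ, x)` with
`x` on an `m`-cycle of `σ` then gives `m · #{σ with an m-cycle} = n · (n - 1)! = n!`, because the
cycle through a given point has length `m` for exactly `(n - 1)!` permutations, whatever
`1 ≤ m ≤ n` (induction on `n`, removing the point from its cycle). Hence the team loses with
probability `∑_{m = n/2 + 1}^{n} 1 / m`.
-/

/-- The lockers opened by player `i` using the pointer-following strategy:
`a_i 0 = i` and `a_i (j+1) = σ⁻¹ (a_i j)`, i.e. `a_i j = (σ⁻¹)^j i`. -/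
def opened {n : ℕ} (σ : Equiv.Perm (Fin n)) (i : Fin n) (j : ℕ) : Fin n :=
  (σ.symm ^ j) i

open Finset Function Fintype
open scoped Nat

namespace Equiv.Perm

section Cycles

variable {α : Type*} {σ : Perm α} {x y : α}

theorem minimalPeriod_pos [Finite α] (σ : Perm α) (x : α) : 0 < minimalPeriod σ x :=
  minimalPeriod_pos_of_mem_periodicPts (σ.injective.mem_periodicPts x)

theorem SameCycle.minimalPeriod_eq [Finite α] (h : σ.SameCycle x y) :
    minimalPeriod σ x = minimalPeriod σ y := by
  obtain ⟨i, -, rfl⟩ := h.exists_pow_eq'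
  rw [coe_pow, minimalPeriod_apply_iterate (σ.injective.mem_periodicPts x)]

variable [Fintype α] [DecidableEq α]

theorem card_filter_sameCycle (σ : Perm α) (x : α) :
    #{y | σ.SameCycle x y} = minimalPeriod σ x := by
  have hcycle : ({y | σ.SameCycle x y} : Finset α) =
      (range (minimalPeriod σ x)).image (σ^[·] x) := by
    ext y
    simp only [mem_filter, mem_univ, true_and, mem_image, mem_range]
    constructor
    · intro h
      obtain ⟨i, -, rfl⟩ := h.exists_pow_eq'
      exact ⟨i % minimalPeriod σ x, Nat.mod_lt _ (σ.minimalPeriod_pos x),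
        by rw [iterate_mod_minimalPeriod_eq, coe_pow]⟩
    · rintro ⟨i, -, rfl⟩
      exact ⟨i, by rw [zpow_natCast, coe_pow]⟩
  rw [hcycle, Finset.card_image_of_injOn (by simpa using iterate_injOn_Iio_minimalPeriod),
    card_range]

/-- Two distinct cycles are disjoint, so their lengths add up to at most `card α`. -/
theorem sameCycle_of_card_lt_add (h : card α < minimalPeriod σ x + minimalPeriod σ y) :
    σ.SameCycle x y := by
  by_contra hxy
  have hdisj : _root_.Disjoint (α := Finset α) {z | σ.SameCycle x z} {z | σ.SameCycle y z} :=
    disjoint_filter.mpr fun _ _ hxz hyz => hxy (hxz.trans hyz.symm)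
  have := (card_union_of_disjoint hdisj).symm.trans_le (card_le_univ _)
  rw [card_filter_sameCycle, card_filter_sameCycle] at this
  omega

theorem card_filter_minimalPeriod_eq_of_card_lt {m : ℕ} (hx : minimalPeriod σ x = m)
    (hm : card α < 2 * m) : #{y | minimalPeriod σ y = m} = m := by
  calc #{y | minimalPeriod σ y = m} = #{y | σ.SameCycle x y} := by
        congr 1
        ext y
        simp only [mem_filter, mem_univ, true_and]
        exact ⟨fun hy => sameCycle_of_card_lt_add (by omega),
          fun h => h.minimalPeriod_eq ▸ hx⟩
    _ = m := by rw [card_filter_sameCycle, hx]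

end Cycles

section Counting

variable {α β : Type*}

theorem minimalPeriod_permCongr (e : α ≃ β) (σ : Perm α) (x : α) :
    minimalPeriod (e.permCongr σ) (e x) = minimalPeriod σ x := by
  have hconj : Semiconj e σ (e.permCongr σ) := fun y => by simp [permCongr_apply]
  refine minimalPeriod_eq_minimalPeriod_iff.mpr fun n => ?_
  rw [IsPeriodicPt, IsFixedPt, IsPeriodicPt, IsFixedPt, ← (hconj.iterate_right n).eq x,
    e.apply_eq_iff_eq]

variable [DecidableEq α]

theorem minimalPeriod_decomposeOption_symm_none (e : Perm α) :
    minimalPeriod (decomposeOption.symm (none, e)) none = 1 :=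
  minimalPeriod_eq_one_iff_isFixedPt.mpr (by simp [IsFixedPt])

/-- `decomposeOption` cuts `none` out of its cycle; backwards, `none` is inserted into the cycle
of `q` under `e` right before `q`. -/
theorem minimalPeriod_decomposeOption_symm_some [Finite α] (e : Perm α) (q : α) :
    minimalPeriod (decomposeOption.symm (some q, e)) none = minimalPeriod e q + 1 := by
  set σ := decomposeOption.symm (some q, e)
  set L := minimalPeriod e q
  have hL : 0 < L := e.minimalPeriod_pos q
  have hσ : ∀ y, σ (some y) = if e y = q then none else some (e y) := fun y => by
    by_cases h : e y = q <;> simp [σ, swap_apply_def, h]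
  have hiter : ∀ j < L, σ^[j + 1] none = some (e^[j] q) := by
    intro j hj
    induction j with
    | zero => simp [σ]
    | succ j ih =>
      rw [iterate_succ_apply', ih (by omega), hσ, ← iterate_succ_apply' e]
      exact if_neg (not_isPeriodicPt_of_pos_of_lt_minimalPeriod (by omega) hj)
  have hret : IsPeriodicPt σ (L + 1) none := by
    obtain ⟨j, hj⟩ : ∃ j, L = j + 1 := ⟨L - 1, by omega⟩
    rw [IsPeriodicPt, IsFixedPt, hj, iterate_succ_apply', hiter j (by omega), hσ,
      ← iterate_succ_apply' e]
    have hperiod : e^[j + 1] q = q := hj ▸ iterate_minimalPeriod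
    exact if_pos hperiod
  refine le_antisymm (hret.minimalPeriod_le (by omega)) (not_lt.mp fun hlt => ?_)
  obtain ⟨j, hj⟩ : ∃ j, minimalPeriod σ none = j + 1 :=
    ⟨_ - 1, (Nat.sub_add_cancel (σ.minimalPeriod_pos none)).symm⟩
  have hfix : σ^[minimalPeriod σ none] none = none := iterate_minimalPeriod
  rw [hj, hiter j (by omega)] at hfix
  exact Option.some_ne_none _ hfix

variable [Fintype α]

theorem card_filter_minimalPeriod_permCongr [DecidableEq β] [Fintype β] (e : α ≃ β) (a : α)
    (m : ℕ) : #{σ : Perm α | minimalPeriod σ a = m} = #{τ : Perm β | minimalPeriod τ (e a) = m} :=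
  card_equiv e.permCongr (by simp [minimalPeriod_permCongr])

theorem card_filter_minimalPeriod_none (m : ℕ) :
    #{σ : Perm (Option α) | minimalPeriod σ none = m} =
      (if m = 1 then (card α)! else 0) + ∑ q, #{e : Perm α | minimalPeriod e q + 1 = m} := by
  calc #{σ : Perm (Option α) | minimalPeriod σ none = m}
      = #{p : Option α × Perm α | minimalPeriod (decomposeOption.symm p) none = m} :=
        card_equiv decomposeOption fun σ => by
          simp only [mem_filter, mem_univ, true_and, symm_apply_apply]
    _ = ∑ p : Option α, #{e : Perm α | minimalPeriod (decomposeOption.symm (p, e)) none = m} := by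
        simp only [card_filter, Fintype.sum_prod_type]
    _ = _ := by
        rw [Fintype.sum_option]
        simp only [minimalPeriod_decomposeOption_symm_none,
          minimalPeriod_decomposeOption_symm_some]
        split_ifs with hm <;> simp [hm, eq_comm, card_perm]

theorem card_filter_minimalPeriod_eq (a : α) {m : ℕ} (hm : 0 < m) (hmα : m ≤ card α) :
    #{σ : Perm α | minimalPeriod σ a = m} = (card α - 1)! := by
  induction hα : card α generalizing α m with
  | zero => omega
  | succ n ih =>
    have hβ : card {b // b ≠ a} = n := by simp [card_subtype_compl, hα]
    rw [card_filter_minimalPeriod_permCongr (optionSubtypeNe a).symm,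
      optionSubtypeNe_symm_self, card_filter_minimalPeriod_none, hβ]
    obtain rfl | hm1 := eq_or_ne m 1
    · simp [(minimalPeriod_pos _ _).ne']
    · have hshift : ∀ q : {b // b ≠ a}, #{e : Perm {b // b ≠ a} | minimalPeriod e q + 1 = m} =
          (n - 1)! := fun q => by
        rw [← ih q (m := m - 1) (by omega) (by omega) hβ]
        congr 1
        ext e
        simp only [mem_filter, mem_univ, true_and]
        omega
      rw [if_neg hm1, Finset.sum_congr rfl fun q _ => hshift q, sum_const, card_univ, hβ,
        smul_eq_mul, zero_add, Nat.add_sub_cancel, Nat.mul_factorial_pred (by omega)]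

theorem card_filter_exists_minimalPeriod_eq_mul {m : ℕ} (hm : card α < 2 * m)
    (hmα : m ≤ card α) : #{σ : Perm α | ∃ x, minimalPeriod σ x = m} * m = (card α)! := by
  have hpoints : ∀ σ : Perm α, #{x | minimalPeriod σ x = m} =
      if ∃ x, minimalPeriod σ x = m then m else 0 := fun σ => by
    split_ifs with h
    · obtain ⟨x, hx⟩ := h
      exact card_filter_minimalPeriod_eq_of_card_lt hx hm
    · exact card_eq_zero.mpr (filter_eq_empty_iff.mpr fun x _ hx => h ⟨x, hx⟩)
  calc #{σ : Perm α | ∃ x, minimalPeriod σ x = m} * m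
      = ∑ σ : Perm α, #{x | minimalPeriod σ x = m} := by
        simp only [hpoints, sum_ite, sum_const_zero, add_zero, sum_const, smul_eq_mul]
    _ = ∑ x : α, #{σ : Perm α | minimalPeriod σ x = m} := by
        simp only [card_filter]
        exact sum_comm
    _ = (card α)! := by
        rw [Finset.sum_congr rfl fun x _ => card_filter_minimalPeriod_eq x (by omega) hmα,
          sum_const, card_univ, smul_eq_mul, Nat.mul_factorial_pred (by omega)]

theorem card_filter_not_forall_minimalPeriod_le {h : ℕ} (hh : card α ≤ 2 * h) :
    #{σ : Perm α | ¬∀ x, minimalPeriod σ x ≤ h} =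
      ∑ m ∈ Ioc h (card α), #{σ : Perm α | ∃ x, minimalPeriod σ x = m} := by
  rw [← card_biUnion]
  · congr 1
    ext σ
    simp only [mem_filter, mem_univ, true_and, mem_biUnion, mem_Ioc, not_forall, not_le]
    exact ⟨fun ⟨x, hx⟩ => ⟨_, ⟨hx, minimalPeriod_le_card⟩, x, rfl⟩,
      fun ⟨m, ⟨hm, _⟩, x, hx⟩ => ⟨x, hx ▸ hm⟩⟩
  · intro m hm m' hm' hne
    simp only [coe_Ioc, Set.mem_Ioc] at hm hm'
    refine disjoint_filter.mpr fun σ _ ⟨x, hx⟩ ⟨y, hy⟩ => hne ?_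
    rw [← hx, ← hy]
    exact (sameCycle_of_card_lt_add (σ := σ) (x := x) (y := y) (by omega)).minimalPeriod_eq

theorem card_filter_forall_minimalPeriod_le_div {h : ℕ} (hh : card α ≤ 2 * h) :
    (#{σ : Perm α | ∀ x, minimalPeriod σ x ≤ h} : ℝ) / (card α)! =
      1 - ∑ m ∈ Ioc h (card α), (1 : ℝ) / m := by
  have hfac : ((card α)! : ℝ) ≠ 0 := by positivity
  have hsplit := card_filter_add_card_filter_not (s := (univ : Finset (Perm α)))
    (p := fun σ => ∀ x, minimalPeriod σ x ≤ h)
  rw [card_univ, card_perm, card_filter_not_forall_minimalPeriod_le hh] at hsplit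
  have hlong : ∀ m ∈ Ioc h (card α),
      (#{σ : Perm α | ∃ x, minimalPeriod σ x = m} : ℝ) / (card α)! = 1 / m := by
    intro m hm
    rw [mem_Ioc] at hm
    have hm0 : (m : ℝ) ≠ 0 := by norm_cast; omega
    rw [div_eq_div_iff hfac hm0, one_mul, ← Nat.cast_mul,
      card_filter_exists_minimalPeriod_eq_mul (by omega) hm.2]
  rw [← sum_congr rfl hlong, ← sum_div, eq_sub_iff_add_eq, ← add_div, div_eq_one_iff_eq hfac]
  exact_mod_cast hsplit

end Counting

end Equiv.Perm

theorem mem_image_opened_iff {n : ℕ} (σ : Equiv.Perm (Fin n)) (i : Fin n) (h : ℕ) :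
    σ i ∈ (range h).image (opened σ i) ↔ minimalPeriod σ i ≤ h := by
  have hopened : ∀ j, opened σ i j = σ i ↔ IsPeriodicPt σ (j + 1) i := fun j => by
    rw [opened, ← Equiv.Perm.inv_def, inv_pow, Equiv.Perm.inv_eq_iff_eq, eq_comm, IsPeriodicPt,
      IsFixedPt, iterate_succ_apply, Equiv.Perm.coe_pow]
  simp only [mem_image, mem_range, hopened]
  constructor
  · rintro ⟨j, hj, hper⟩
    exact (hper.minimalPeriod_le j.succ_pos).trans hj
  · intro hle
    have hpos := σ.minimalPeriod_pos i
    exact ⟨minimalPeriod σ i - 1, by omega, by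
      rw [Nat.sub_add_cancel hpos]; exact isPeriodicPt_minimalPeriod _ _⟩

theorem locker_pointer_following_win_probability_general (n : ℕ) (hne : Even n) :
    ((Finset.univ.filter
        (fun σ : Equiv.Perm (Fin n) =>
          ∀ i : Fin n, σ i ∈ (Finset.range (n / 2)).image (opened σ i))).card : ℝ)
        / (n.factorial : ℝ)
      = 1 - ∑ k ∈ Finset.Icc 1 (n / 2), (1 : ℝ) / ((n / 2 + k : ℕ) : ℝ) := by
  obtain ⟨h, rfl⟩ := hne
  have hhalf : (h + h) / 2 = h := by omega
  have hprob := Equiv.Perm.card_filter_forall_minimalPeriod_le_div (α := Fin (h + h)) (h := h)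
    (by rw [Fintype.card_fin]; omega)
  rw [Fintype.card_fin, ← Icc_add_one_left_eq_Ioc, ← map_add_left_Icc, sum_map] at hprob
  simp only [addLeftEmbedding_apply] at hprob
  simp only [mem_image_opened_iff, hhalf]
  -- the two filters differ only in their decidability instances
  convert hprob

/-- For `n` even and positive, if `σ` is a uniformly random permutation of `Fin n` and
every player uses the pointer-following strategy with `n/2` openings, the probability
that all `n` players win (each player `i` opens the locker `σ i` containing his label)
equals `1 − ∑_{k=1}^{n/2} 1/(n/2 + k)`. -/
theorem locker_pointer_following_win_probability (n : ℕ) (hn : 0 < n) (hne : Even n) :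
    ((Finset.univ.filter
        (fun σ : Equiv.Perm (Fin n) =>
          ∀ i : Fin n, σ i ∈ (Finset.range (n / 2)).image (opened σ i))).card : ℝ)
        / (n.factorial : ℝ)
      = 1 - ∑ k ∈ Finset.Icc 1 (n / 2), (1 : ℝ) / ((n / 2 + k : ℕ) : ℝ) :=
  locker_pointer_following_win_probability_general n hne
end

section
/- For every natural number m ≥ 1, ∑_{k=1}^{m} 1/(m + k) < ln 2. Consequently, for every positive even n, the pointer-following strategy's winning probability 1 − ∑_{k=1}^{n/2} 1/(n/2 + k) is strictly greater than 1 − ln 2. -/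
/-!
Applying `log y < y - 1` to `y = x / (x + 1)` gives `1 / (x + 1) < log (x + 1) - log x` for
`x > 0`. Summing over `x = m, …, 2m - 1`, the right-hand sides telescope to
`log (2m) - log m = log 2`.
-/

open Finset Real

lemma inv_add_one_lt_log_add_one_sub_log {x : ℝ} (hx : 0 < x) :
    (x + 1)⁻¹ < log (x + 1) - log x := by
  have hx1 : 0 < x + 1 := by linarith
  have hratio : x / (x + 1) ≠ 1 := by
    rw [Ne, div_eq_one_iff_eq hx1.ne']
    linarith
  have hlog := log_lt_sub_one_of_pos (div_pos hx hx1) hratio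
  rw [log_div hx.ne' hx1.ne'] at hlog
  have hrewrite : x / (x + 1) - 1 = -(x + 1)⁻¹ := by field_simp; ring
  linarith

lemma sum_Icc_inv_add_lt_log_sub_log {a : ℝ} (ha : 0 < a) {n : ℕ} (hn : 1 ≤ n) :
    ∑ k ∈ Icc 1 n, (a + k)⁻¹ < log (a + n) - log a := by
  induction n, hn using Nat.le_induction with
  | base => simpa using inv_add_one_lt_log_add_one_sub_log ha
  | succ n hn ih =>
    rw [sum_Icc_succ_top (by omega), Nat.cast_succ]
    have hstep := inv_add_one_lt_log_add_one_sub_log (x := a + n) (by positivity)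
    rw [← add_assoc]
    linarith

lemma sum_Icc_one_div_add_lt_log_two {m : ℕ} (hm : 1 ≤ m) :
    ∑ k ∈ Icc 1 m, (1 : ℝ) / ((m + k : ℕ) : ℝ) < log 2 := by
  have hm0 : (0 : ℝ) < m := by exact_mod_cast hm
  have hlog : log ((m : ℝ) + m) - log m = log 2 := by
    rw [← two_mul, log_mul two_ne_zero hm0.ne']
    ring
  simpa only [one_div, Nat.cast_add, hlog] using sum_Icc_inv_add_lt_log_sub_log hm0 hm

/-- For every `m ≥ 1`, `∑_{k=1}^{m} 1/(m + k) < ln 2`; consequently, for every positive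
even `n`, the pointer-following strategy's winning probability
`1 − ∑_{k=1}^{n/2} 1/(n/2 + k)` is strictly greater than `1 − ln 2`. -/
theorem harmonic_tail_lt_log_two :
    (∀ m : ℕ, 1 ≤ m →
        ∑ k ∈ Finset.Icc 1 m, (1 : ℝ) / ((m + k : ℕ) : ℝ) < Real.log 2)
    ∧
    (∀ n : ℕ, 0 < n → Even n →
        1 - Real.log 2 <
          1 - ∑ k ∈ Finset.Icc 1 (n / 2), (1 : ℝ) / ((n / 2 + k : ℕ) : ℝ)) := by
  refine ⟨fun m hm => sum_Icc_one_div_add_lt_log_two hm, fun n hn hn_even => ?_⟩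
  obtain ⟨r, rfl⟩ := hn_even
  linarith [sum_Icc_one_div_add_lt_log_two (m := (r + r) / 2) (by omega)]
end

section
/- Let n ≥ 1 and N = ⌊√n⌋. Suppose each player i : Fin n uses a deterministic adaptive strategy s_i : List (Fin n) → Fin n, where for a permutation σ of Fin n the lockers opened by player i are defined recursively by o_i 0 = s_i [] and o_i (j+1) = s_i [σ⁻¹(o_i 0), …, σ⁻¹(o_i j)] (locker x contains label σ⁻¹(x)), and each player opens N lockers. Then the number of permutations σ of Fin n for which every player i satisfies σ(i) ∈ {o_i 0, …, o_i (N−1)} is at most n!/N!. Equivalently, for σ uniformly random, the probability that all players win is at most 1/⌊√n⌋!. -/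
/-- The history of labels revealed to a player using the deterministic adaptive strategy
`s : List (Fin n) → Fin n` against the permutation `σ` (locker `x` contains label
`σ⁻¹ x`): `hist σ s j` is the list `[σ⁻¹(o 0), …, σ⁻¹(o (j-1))]` of the labels revealed
by the first `j` openings, where the `j`-th locker opened is `o j = s (hist σ s j)`. -/
def hist {n : ℕ} (σ : Equiv.Perm (Fin n)) (s : List (Fin n) → Fin n) :
    ℕ → List (Fin n)
  | 0 => []
  | j + 1 => hist σ s j ++ [σ.symm (s (hist σ s j))]

/-- The `j`-th locker opened (counting from `0`) by a player with strategy `s` against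
the permutation `σ`. -/
def openedLocker {n : ℕ} (σ : Equiv.Perm (Fin n)) (s : List (Fin n) → Fin n)
    (j : ℕ) : Fin n :=
  s (hist σ s j)

namespace LockerAux

open Finset
open scoped Classical

variable {n : ℕ}

lemma length_hist (σ : Equiv.Perm (Fin n)) (st : List (Fin n) → Fin n) (j : ℕ) :
    (hist σ st j).length = j := by
  induction j with
  | zero => simp [hist]
  | succ j ih => simp [hist, ih]

lemma hist_take (σ : Equiv.Perm (Fin n)) (st : List (Fin n) → Fin n) {j k : ℕ}
    (h : j ≤ k) : (hist σ st k).take j = hist σ st j := by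
  induction k with
  | zero => have : j = 0 := Nat.le_zero.mp h; subst this; simp [hist]
  | succ k ih =>
    rcases Nat.lt_or_ge j (k+1) with h' | h'
    · have hj : j ≤ k := Nat.lt_succ_iff.mp h'
      rw [hist, List.take_append_of_le_length (by rw [length_hist]; exact hj), ih hj]
    · have hjk : j = k + 1 := le_antisymm h h'
      subst hjk
      exact List.take_of_length_le (le_of_eq (length_hist σ st (k+1)))

lemma hist_eq_of_eq {σ σ₁ : Equiv.Perm (Fin n)} {st : List (Fin n) → Fin n} {N k : ℕ}
    (h : hist σ st N = hist σ₁ st N) (hk : k ≤ N) : hist σ st k = hist σ₁ st k := by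
  rw [← hist_take σ st hk, ← hist_take σ₁ st hk, h]

lemma opened_eq_of_eq {σ σ₁ : Equiv.Perm (Fin n)} {st : List (Fin n) → Fin n} {N k : ℕ}
    (h : hist σ st N = hist σ₁ st N) (hk : k ≤ N) :
    openedLocker σ st k = openedLocker σ₁ st k := by
  unfold openedLocker; rw [hist_eq_of_eq h hk]

lemma symm_opened_eq_of_eq {σ σ₁ : Equiv.Perm (Fin n)} {st : List (Fin n) → Fin n} {N k : ℕ}
    (h : hist σ st N = hist σ₁ st N) (hk : k < N) :
    σ.symm (openedLocker σ st k) = σ₁.symm (openedLocker σ₁ st k) := by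
  have h1 : hist σ st (k+1) = hist σ₁ st (k+1) := hist_eq_of_eq h hk
  have h0 : hist σ st k = hist σ₁ st k := hist_eq_of_eq h (le_of_lt hk)
  rw [hist, hist, h0] at h1
  have := List.append_cancel_left h1
  simpa [openedLocker, h0] using this

/-- The conditioning class: permutations agreeing with `σ₀` (as label assignments)
on the revealed lockers `R`. -/
def Cls (R : Finset (Fin n)) (σ₀ : Equiv.Perm (Fin n)) : Finset (Equiv.Perm (Fin n)) :=
  univ.filter fun σ => ∀ x ∈ R, σ.symm x = σ₀.symm x

lemma mem_Cls {R : Finset (Fin n)} {σ₀ σ : Equiv.Perm (Fin n)} :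
    σ ∈ Cls R σ₀ ↔ ∀ x ∈ R, σ.symm x = σ₀.symm x := by simp [Cls]

/-- Transcript determinism: within a class whose revealed set contains all lockers
opened (under the base point) before step `k₀`, histories agree up to `k₀`. -/
lemma hist_eq_of_agree {st : List (Fin n) → Fin n} {R : Finset (Fin n)}
    {σ₀ σ : Equiv.Perm (Fin n)} (hag : ∀ x ∈ R, σ.symm x = σ₀.symm x) {k₀ : ℕ}
    (hR : ∀ j < k₀, st (hist σ₀ st j) ∈ R) :
    ∀ j, j ≤ k₀ → hist σ st j = hist σ₀ st j := by
  intro j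
  induction j with
  | zero => intro _; rfl
  | succ j ih =>
    intro hj
    have hj' : j ≤ k₀ := le_of_lt hj
    rw [hist, hist, ih hj', hag _ (hR j hj)]

lemma card_fixing (R : Finset (Fin n)) :
    (univ.filter (fun π : Equiv.Perm (Fin n) => ∀ x ∈ R, π x = x)).card
      = (n - R.card).factorial := by
  rw [← Fintype.card_subtype]
  have e : {π : Equiv.Perm (Fin n) // ∀ x ∈ R, π x = x}
      ≃ Equiv.Perm {x : Fin n // x ∉ R} := by
    refine (Equiv.subtypeEquivRight ?_).trans
      (Equiv.Perm.subtypeEquivSubtypePerm (p := fun x : Fin n => x ∉ R)).symm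
    intro π
    constructor
    · intro h a ha; exact h a (not_not.mp ha)
    · intro h a ha; exact h a (not_not.mpr ha)
  rw [Fintype.card_congr e, Fintype.card_perm]
  congr 1
  rw [Fintype.card_subtype_compl, Fintype.card_fin, Fintype.card_coe]

lemma card_Cls (R : Finset (Fin n)) (σ₀ : Equiv.Perm (Fin n)) :
    (Cls R σ₀).card = (n - R.card).factorial := by
  rw [← card_fixing R]
  symm
  apply Finset.card_bij (fun π _ => σ₀.trans π)
  · intro π hπ
    rw [mem_Cls]
    intro x hx
    have hfix : π x = x := (mem_filter.mp hπ).2 x hx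
    have hsf : π.symm x = x := by
      conv_lhs => rw [← hfix]
      exact π.symm_apply_apply x
    rw [Equiv.symm_trans_apply, hsf]
  · intro π hπ π' hπ' h
    have : σ₀.symm.trans (σ₀.trans π) = σ₀.symm.trans (σ₀.trans π') := by rw [h]
    ext x
    have h2 := congrArg (fun e : Equiv.Perm (Fin n) => e x) this
    have h3 : π x = π' x := by simpa using h2
    exact congrArg Fin.val h3
  · intro σ hσ
    refine ⟨σ₀.symm.trans σ, ?_, ?_⟩
    · rw [mem_filter]
      refine ⟨mem_univ _, ?_⟩
      intro x hx
      have hx' : σ.symm x = σ₀.symm x := (mem_Cls.mp hσ) x hx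
      simp [Equiv.trans_apply, ← hx']
    · ext x; simp

/-- Single-player bound: within a class where player `p`'s label has not been revealed
and the first `k₀` openings are already determined, the number of permutations for which
`p` finds his own label within the next `k` openings is at most `k * (n - |R| - 1)!`. -/
lemma single_player (st : List (Fin n) → Fin n) (p : Fin n) :
    ∀ (k k₀ : ℕ) (R : Finset (Fin n)) (σ₀ : Equiv.Perm (Fin n)),
      (∀ j < k₀, st (hist σ₀ st j) ∈ R) →
      (∀ x ∈ R, σ₀.symm x ≠ p) →
      ((Cls R σ₀).filter
          (fun σ => ∃ j, k₀ ≤ j ∧ j < k₀ + k ∧ openedLocker σ st j = σ p)).card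
        ≤ k * (n - R.card - 1).factorial := by
  intro k
  induction k with
  | zero =>
    intro k₀ R σ₀ _ _
    have : ((Cls R σ₀).filter
        (fun σ => ∃ j, k₀ ≤ j ∧ j < k₀ + 0 ∧ openedLocker σ st j = σ p)) = ∅ := by
      apply Finset.filter_false_of_mem
      rintro σ _ ⟨j, hj1, hj2, _⟩
      omega
    rw [this]; simp
  | succ k ih =>
    intro k₀ R σ₀ hR hp
    set c := st (hist σ₀ st k₀) with hc_def
    have hhist : ∀ σ ∈ Cls R σ₀, ∀ j ≤ k₀, hist σ st j = hist σ₀ st j := by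
      intro σ hσ j hj
      exact hist_eq_of_agree (mem_Cls.mp hσ) hR j hj
    have hopen : ∀ σ ∈ Cls R σ₀, openedLocker σ st k₀ = c := by
      intro σ hσ
      unfold openedLocker
      rw [hhist σ hσ k₀ le_rfl]
    set E₀ : Finset (Equiv.Perm (Fin n)) :=
      (Cls R σ₀).filter (fun σ => σ.symm c = p) with hE₀
    set E₁ : Finset (Equiv.Perm (Fin n)) :=
      (Cls R σ₀).filter (fun σ => σ.symm c ≠ p ∧
        ∃ j, k₀ + 1 ≤ j ∧ j < (k₀ + 1) + k ∧ openedLocker σ st j = σ p) with hE₁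
    have hsub : ((Cls R σ₀).filter
        (fun σ => ∃ j, k₀ ≤ j ∧ j < k₀ + (k+1) ∧ openedLocker σ st j = σ p)) ⊆ E₀ ∪ E₁ := by
      intro σ hσ
      rw [mem_filter] at hσ
      obtain ⟨hσc, j, hj1, hj2, hj3⟩ := hσ
      by_cases hps : σ.symm c = p
      · exact Finset.mem_union_left _ (mem_filter.mpr ⟨hσc, hps⟩)
      · refine Finset.mem_union_right _ (mem_filter.mpr ⟨hσc, hps, j, ?_, by omega, hj3⟩)
        rcases Nat.lt_or_ge k₀ j with h' | h'
        · omega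
        · exfalso
          have hj0 : j = k₀ := le_antisymm h' hj1
          subst hj0
          rw [hopen σ hσc] at hj3
          apply hps
          rw [hj3]
          exact σ.symm_apply_apply p
    have hcard : ((Cls R σ₀).filter
        (fun σ => ∃ j, k₀ ≤ j ∧ j < k₀ + (k+1) ∧ openedLocker σ st j = σ p)).card
        ≤ E₀.card + E₁.card :=
      le_trans (Finset.card_le_card hsub) (Finset.card_union_le _ _)
    by_cases hcR : c ∈ R
    · -- E₀ is empty, E₁ is bounded by the IH with the same R
      have hE0 : E₀ = ∅ := by
        apply Finset.filter_false_of_mem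
        intro σ hσ
        rw [mem_Cls] at hσ
        rw [hσ c hcR]
        exact hp c hcR
      have hE1 : E₁.card ≤ k * (n - R.card - 1).factorial := by
        refine le_trans (Finset.card_le_card ?_) (ih (k₀+1) R σ₀ ?_ hp)
        · intro σ hσ
          rw [mem_filter] at hσ ⊢
          exact ⟨hσ.1, hσ.2.2⟩
        · intro j hj
          rcases Nat.lt_or_ge j k₀ with h' | h'
          · exact hR j h'
          · have : j = k₀ := by omega
            subst this; exact hcR
      rw [hE0] at hcard
      simp only [Finset.card_empty, Nat.zero_add] at hcard
      calc _ ≤ E₁.card := hcard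
        _ ≤ k * (n - R.card - 1).factorial := hE1
        _ ≤ (k+1) * (n - R.card - 1).factorial := by
            apply Nat.mul_le_mul_right; omega
    · -- c ∉ R
      have hE0 : E₀.card ≤ (n - R.card - 1).factorial := by
        rcases E₀.eq_empty_or_nonempty with h | ⟨σ₁, hσ₁⟩
        · rw [h]; simp
        · have hsub0 : E₀ ⊆ Cls (insert c R) σ₁ := by
            intro σ hσ
            rw [mem_filter] at hσ hσ₁
            rw [mem_Cls]
            intro x hx
            rcases Finset.mem_insert.mp hx with h | h
            · subst h; rw [hσ.2, hσ₁.2]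
            · rw [(mem_Cls.mp hσ.1) x h, (mem_Cls.mp hσ₁.1) x h]
          calc E₀.card ≤ (Cls (insert c R) σ₁).card := Finset.card_le_card hsub0
            _ = (n - (insert c R).card).factorial := card_Cls _ _
            _ = (n - R.card - 1).factorial := by
                rw [Finset.card_insert_of_notMem hcR]
                congr 1
      have hE1 : E₁.card ≤ (n - R.card - 1) * (k * (n - R.card - 2).factorial) := by
        set t : Finset (Fin n) := (univ \ R.image σ₀.symm).erase p with ht
        have hmap : ∀ σ ∈ E₁, σ.symm c ∈ t := by
          intro σ hσ
          rw [mem_filter] at hσ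
          obtain ⟨hσc, hne, _⟩ := hσ
          rw [ht, Finset.mem_erase]
          refine ⟨hne, Finset.mem_sdiff.mpr ⟨mem_univ _, ?_⟩⟩
          intro hmem
          obtain ⟨x, hx, hxe⟩ := Finset.mem_image.mp hmem
          have : σ.symm c = σ.symm x := by
            rw [(mem_Cls.mp hσc) x hx, hxe]
          exact hcR (by rwa [σ.symm.injective this])
        rw [Finset.card_eq_sum_card_fiberwise hmap]
        have hfiber : ∀ l ∈ t, (E₁.filter (fun σ => σ.symm c = l)).card
            ≤ k * (n - R.card - 2).factorial := by
          intro l hl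
          rcases (E₁.filter (fun σ => σ.symm c = l)).eq_empty_or_nonempty with h | ⟨σ₁, hσ₁⟩
          · rw [h]; simp
          · rw [mem_filter, mem_filter] at hσ₁
            obtain ⟨⟨hσ₁c, hσ₁p, _⟩, hσ₁l⟩ := hσ₁
            have hlp : l ≠ p := (Finset.mem_erase.mp hl).1
            have hR' : ∀ j < k₀+1, st (hist σ₁ st j) ∈ insert c R := by
              intro j hj
              have hj' : hist σ₁ st j = hist σ₀ st j := hhist σ₁ hσ₁c j (by omega)
              rw [hj']
              rcases Nat.lt_or_ge j k₀ with h' | h'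
              · exact Finset.mem_insert_of_mem (hR j h')
              · have : j = k₀ := by omega
                subst this
                exact Finset.mem_insert_self _ _
            have hp' : ∀ x ∈ insert c R, σ₁.symm x ≠ p := by
              intro x hx
              rcases Finset.mem_insert.mp hx with h | h
              · subst h; rw [hσ₁l]; exact hlp
              · rw [(mem_Cls.mp hσ₁c) x h]; exact hp x h
            have key := ih (k₀+1) (insert c R) σ₁ hR' hp'
            rw [Finset.card_insert_of_notMem hcR] at key
            have he : n - (R.card + 1) - 1 = n - R.card - 2 := by omega
            rw [he] at key
            refine le_trans (Finset.card_le_card ?_) key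
            · intro σ hσ
              rw [mem_filter, mem_filter] at hσ
              obtain ⟨⟨hσc, hσp, hj⟩, hσl⟩ := hσ
              rw [mem_filter, mem_Cls]
              constructor
              · intro x hx
                rcases Finset.mem_insert.mp hx with h | h
                · subst h; rw [hσl, hσ₁l]
                · rw [(mem_Cls.mp hσc) x h, (mem_Cls.mp hσ₁c) x h]
              · exact hj
        calc ∑ l ∈ t, (E₁.filter (fun σ => σ.symm c = l)).card
            ≤ ∑ _l ∈ t, k * (n - R.card - 2).factorial := Finset.sum_le_sum hfiber
          _ = t.card * (k * (n - R.card - 2).factorial) := by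
              rw [Finset.sum_const, smul_eq_mul]
          _ ≤ (n - R.card - 1) * (k * (n - R.card - 2).factorial) := by
              apply Nat.mul_le_mul_right
              rw [ht]
              have hpt : p ∈ univ \ R.image σ₀.symm := by
                refine Finset.mem_sdiff.mpr ⟨mem_univ _, ?_⟩
                intro hmem
                obtain ⟨x, hx, hxe⟩ := Finset.mem_image.mp hmem
                exact hp x hx hxe
              rw [Finset.card_erase_of_mem hpt, Finset.card_sdiff_of_subset (Finset.subset_univ _),
                Finset.card_univ, Fintype.card_fin,
                Finset.card_image_of_injective _ σ₀.symm.injective]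
      have harith : (n - R.card - 1) * (k * (n - R.card - 2).factorial)
          ≤ k * (n - R.card - 1).factorial := by
        rcases Nat.eq_zero_or_pos (n - R.card - 1) with h | h
        · rw [h]; simp
        · obtain ⟨v, hv⟩ : ∃ v, n - R.card - 1 = v + 1 := ⟨n - R.card - 2, by omega⟩
          rw [hv]
          have hv2 : n - R.card - 2 = v := by omega
          rw [hv2, Nat.factorial_succ]
          ring_nf
          exact le_of_eq (by ring)
      calc _ ≤ E₀.card + E₁.card := hcard
        _ ≤ (n - R.card - 1).factorial + k * (n - R.card - 1).factorial := by
            apply Nat.add_le_add hE0 (le_trans hE1 harith)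
        _ = (k+1) * (n - R.card - 1).factorial := by ring

lemma main_bound (N : ℕ) (hN1 : 1 ≤ N) (hN2 : N * N ≤ n)
    (s : Fin n → List (Fin n) → Fin n) :
    ∀ (m : ℕ), m ≤ N → ∀ (R : Finset (Fin n)) (σ₀ : Equiv.Perm (Fin n)),
      R.card ≤ (N - m) * N →
      m.factorial *
        ((Cls R σ₀).filter
          (fun σ => ∀ i : Fin n,
            σ i ∈ (Finset.range N).image (openedLocker σ (s i)))).card
        ≤ (n - R.card).factorial := by
  intro m
  induction m with
  | zero =>
    intro _ R σ₀ _
    rw [Nat.factorial_zero, one_mul]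
    calc _ ≤ (Cls R σ₀).card := Finset.card_le_card (Finset.filter_subset _ _)
      _ = (n - R.card).factorial := card_Cls _ _
  | succ m ih =>
    intro hm R σ₀ hRcard
    have hRn : R.card < n := by
      have h1 : (N - (m+1)) * N ≤ (N - 1) * N :=
        Nat.mul_le_mul_right _ (by omega)
      have h2 : (N - 1) * N < N * N :=
        Nat.mul_lt_mul_of_lt_of_le (by omega) le_rfl hN1
      omega
    -- choose a player whose label is not revealed
    have hex : ∃ p : Fin n, p ∉ R.image σ₀.symm := by
      by_contra h
      push_neg at h
      have : (univ : Finset (Fin n)) ⊆ R.image σ₀.symm := fun x _ => h x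
      have hle := Finset.card_le_card this
      rw [Finset.card_univ, Fintype.card_fin] at hle
      have := Finset.card_image_le (f := σ₀.symm) (s := R)
      omega
    obtain ⟨p, hp⟩ := hex
    have hp' : ∀ x ∈ R, σ₀.symm x ≠ p := by
      intro x hx he
      exact hp (Finset.mem_image.mpr ⟨x, hx, he⟩)
    set WC := (Cls R σ₀).filter
      (fun σ => ∀ i : Fin n,
        σ i ∈ (Finset.range N).image (openedLocker σ (s i))) with hWC
    set f : Equiv.Perm (Fin n) → List (Fin n) := fun σ => hist σ (s p) N with hf
    set t := WC.image f with htdef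
    set A := (Cls R σ₀).filter
      (fun σ => ∃ j, 0 ≤ j ∧ j < 0 + N ∧ openedLocker σ (s p) j = σ p) with hA
    -- per-fiber bound
    have hkey : ∀ ℓ ∈ t, m.factorial * (WC.filter (fun σ => f σ = ℓ)).card
        ≤ (A.filter (fun σ => f σ = ℓ)).card := by
      intro ℓ hℓ
      obtain ⟨σ₁, hσ₁W, hσ₁ℓ⟩ := Finset.mem_image.mp hℓ
      have hσ₁c : σ₁ ∈ Cls R σ₀ := (Finset.mem_filter.mp hσ₁W).1
      have hσ₁w : ∀ i : Fin n, σ₁ i ∈ (Finset.range N).image (openedLocker σ₁ (s i)) :=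
        (Finset.mem_filter.mp hσ₁W).2
      set R₁ := R ∪ (Finset.range N).image (fun j => openedLocker σ₁ (s p) j) with hR₁
      have hR₁sub : ∀ j < N, openedLocker σ₁ (s p) j ∈ R₁ := by
        intro j hj
        exact Finset.mem_union_right _
          (Finset.mem_image.mpr ⟨j, Finset.mem_range.mpr hj, rfl⟩)
      -- (i) the fiber is inside the refined class
      have hstep1 : WC.filter (fun σ => f σ = ℓ) ⊆
          (Cls R₁ σ₁).filter
            (fun σ => ∀ i : Fin n,
              σ i ∈ (Finset.range N).image (openedLocker σ (s i))) := by
        intro σ hσ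
        rw [Finset.mem_filter] at hσ
        obtain ⟨hσW, hσℓ⟩ := hσ
        rw [Finset.mem_filter] at hσW ⊢
        obtain ⟨hσc, hσw⟩ := hσW
        have hhisteq : hist σ (s p) N = hist σ₁ (s p) N := by
          rw [show hist σ (s p) N = f σ from rfl, hσℓ, ← hσ₁ℓ]
        refine ⟨mem_Cls.mpr ?_, hσw⟩
        intro x hx
        rcases Finset.mem_union.mp hx with h | h
        · rw [(mem_Cls.mp hσc) x h, (mem_Cls.mp hσ₁c) x h]
        · obtain ⟨j, hj, hje⟩ := Finset.mem_image.mp h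
          rw [Finset.mem_range] at hj
          subst hje
          have ho := opened_eq_of_eq hhisteq (le_of_lt hj)
          have hs := symm_opened_eq_of_eq hhisteq hj
          rw [ho] at hs
          exact hs
      -- (ii)+(iii): IH applied to the refined class
      have hR₁card : R₁.card ≤ R.card + N := by
        calc R₁.card ≤ R.card + ((Finset.range N).image
              (fun j => openedLocker σ₁ (s p) j)).card := Finset.card_union_le _ _
          _ ≤ R.card + N := by
              have := Finset.card_image_le (s := Finset.range N)
                (f := fun j => openedLocker σ₁ (s p) j)
              rw [Finset.card_range] at this
              omega
      have hih := ih (by omega) R₁ σ₁ (by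
        calc R₁.card ≤ R.card + N := hR₁card
          _ ≤ (N - (m+1)) * N + N := by omega
          _ = (N - m) * N := by
              have : N - m = (N - (m+1)) + 1 := by omega
              rw [this]; ring)
      -- (iv): the refined class is inside the single-player win set with fiber value ℓ
      have hstep2 : Cls R₁ σ₁ ⊆ A.filter (fun σ => f σ = ℓ) := by
        intro σ hσ
        have hagree : ∀ x ∈ R₁, σ.symm x = σ₁.symm x := mem_Cls.mp hσ
        have hhisteq : ∀ j ≤ N, hist σ (s p) j = hist σ₁ (s p) j := by
          intro j hj
          refine hist_eq_of_agree hagree (k₀ := N) ?_ j hj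
          intro j' hj'
          exact hR₁sub j' hj'
        have hfℓ : f σ = ℓ := by
          rw [hf]; dsimp only; rw [hhisteq N le_rfl, ← hσ₁ℓ]
        refine Finset.mem_filter.mpr ⟨Finset.mem_filter.mpr ⟨?_, ?_⟩, hfℓ⟩
        · rw [mem_Cls]
          intro x hx
          rw [hagree x (Finset.mem_union_left _ hx), (mem_Cls.mp hσ₁c) x hx]
        · obtain ⟨j, hjr, hje⟩ := Finset.mem_image.mp (hσ₁w p)
          rw [Finset.mem_range] at hjr
          refine ⟨j, Nat.zero_le _, by omega, ?_⟩
          have ho : openedLocker σ (s p) j = openedLocker σ₁ (s p) j := by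
            unfold openedLocker; rw [hhisteq j (le_of_lt hjr)]
          have hsymm : σ.symm (openedLocker σ₁ (s p) j) = σ₁.symm (openedLocker σ₁ (s p) j) :=
            hagree _ (hR₁sub j hjr)
          have : σ.symm (openedLocker σ (s p) j) = p := by
            rw [ho, hsymm, hje]
            exact σ₁.symm_apply_apply p
          have h6 : σ (σ.symm (openedLocker σ (s p) j)) = σ p := congrArg σ this
          rwa [σ.apply_symm_apply] at h6
      calc m.factorial * (WC.filter (fun σ => f σ = ℓ)).card
          ≤ m.factorial * ((Cls R₁ σ₁).filter
              (fun σ => ∀ i : Fin n,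
                σ i ∈ (Finset.range N).image (openedLocker σ (s i)))).card :=
            Nat.mul_le_mul_left _ (Finset.card_le_card hstep1)
        _ ≤ (n - R₁.card).factorial := hih
        _ = (Cls R₁ σ₁).card := (card_Cls _ _).symm
        _ ≤ (A.filter (fun σ => f σ = ℓ)).card := Finset.card_le_card hstep2
    -- sum the fibers
    have hsum : m.factorial * WC.card ≤ A.card := by
      rw [Finset.card_eq_sum_card_fiberwise
        (fun x (hx : x ∈ WC) => Finset.mem_image_of_mem f hx), Finset.mul_sum]
      have h1 : ∑ ℓ ∈ t, m.factorial * (WC.filter (fun σ => f σ = ℓ)).card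
          ≤ ∑ ℓ ∈ t, (A.filter (fun σ => f σ = ℓ)).card := Finset.sum_le_sum hkey
      refine le_trans h1 ?_
      -- fibers of A over t are disjoint subsets of A
      have h2 : ∑ ℓ ∈ t, ((A.filter (fun σ => f σ ∈ t)).filter (fun σ => f σ = ℓ)).card
          = (A.filter (fun σ => f σ ∈ t)).card := by
        exact (Finset.card_eq_sum_card_fiberwise
          (fun x hx => (Finset.mem_filter.mp hx).2)).symm
      have h3 : ∀ ℓ ∈ t, (A.filter (fun σ => f σ = ℓ)).card
          = ((A.filter (fun σ => f σ ∈ t)).filter (fun σ => f σ = ℓ)).card := by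
        intro ℓ hℓ
        congr 1
        ext σ
        simp only [Finset.mem_filter]
        constructor
        · rintro ⟨h4, h5⟩; exact ⟨⟨h4, h5 ▸ hℓ⟩, h5⟩
        · rintro ⟨⟨h4, _⟩, h5⟩; exact ⟨h4, h5⟩
      rw [Finset.sum_congr rfl h3, h2]
      exact Finset.card_le_card (Finset.filter_subset _ _)
    -- single-player bound on A
    have hAbound : A.card ≤ N * (n - R.card - 1).factorial := by
      exact single_player (s p) p N 0 R σ₀ (fun j hj => absurd hj (by omega)) hp' 
    -- final arithmetic
    have humN : (m + 1) * N + R.card ≤ n := by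
      have heq : (N - (m+1)) * N + (m+1) * N = N * N := by
        have : (N - (m+1)) + (m+1) = N := by omega
        calc (N - (m+1)) * N + (m+1) * N = ((N - (m+1)) + (m+1)) * N := by ring
          _ = N * N := by rw [this]
      omega
    have hu : (m + 1) * N ≤ n - R.card := by omega
    have hu1 : 1 ≤ n - R.card := by
      have : 1 ≤ (m+1) * N := Nat.mul_pos (Nat.succ_pos m) (by omega)
      omega
    obtain ⟨v, hv⟩ : ∃ v, n - R.card = v + 1 := ⟨n - R.card - 1, by omega⟩
    calc (m+1).factorial * WC.card = (m+1) * (m.factorial * WC.card) := by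
          rw [Nat.factorial_succ]; ring
      _ ≤ (m+1) * A.card := Nat.mul_le_mul_left _ hsum
      _ ≤ (m+1) * (N * (n - R.card - 1).factorial) := Nat.mul_le_mul_left _ hAbound
      _ = ((m+1) * N) * (n - R.card - 1).factorial := by ring
      _ ≤ (n - R.card) * (n - R.card - 1).factorial := Nat.mul_le_mul_right _ hu
      _ = (n - R.card).factorial := by
          rw [hv]
          have : v + 1 - 1 = v := by omega
          rw [this, Nat.factorial_succ]

end LockerAux

/-- In the strict locker puzzle where each of the `n` players opens only `N = ⌊√n⌋`
lockers, for any deterministic adaptive strategies `s i`, the number of permutations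
`σ` for which every player `i` opens the locker `σ i` containing his own label is at
most `n!/N!`; equivalently, for `σ` uniformly random, the probability that all players
win is at most `1/⌊√n⌋!`. -/
theorem strict_locker_classical_bound (n : ℕ) (hn : 1 ≤ n)
    (s : Fin n → List (Fin n) → Fin n) :
    (Finset.univ.filter
        (fun σ : Equiv.Perm (Fin n) =>
          ∀ i : Fin n,
            σ i ∈ (Finset.range (Nat.sqrt n)).image (openedLocker σ (s i)))).card
      ≤ n.factorial / (Nat.sqrt n).factorial
    ∧
    ((Finset.univ.filter
        (fun σ : Equiv.Perm (Fin n) =>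
          ∀ i : Fin n,
            σ i ∈ (Finset.range (Nat.sqrt n)).image (openedLocker σ (s i)))).card : ℝ)
        / (n.factorial : ℝ)
      ≤ 1 / ((Nat.sqrt n).factorial : ℝ) := by
  classical
  have hN1 : 1 ≤ Nat.sqrt n := Nat.sqrt_pos.mpr hn
  have hN2 : Nat.sqrt n * Nat.sqrt n ≤ n := Nat.sqrt_le n
  have hmain := LockerAux.main_bound (Nat.sqrt n) hN1 hN2 s (Nat.sqrt n) le_rfl ∅ 1 (by simp)
  have hCls : LockerAux.Cls (∅ : Finset (Fin n)) (1 : Equiv.Perm (Fin n)) = Finset.univ := by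
    ext σ; simp [LockerAux.Cls]
  rw [hCls] at hmain
  simp only [Finset.card_empty, Nat.sub_zero] at hmain
  have hmain' : (Nat.sqrt n).factorial *
      (Finset.univ.filter
        (fun σ : Equiv.Perm (Fin n) =>
          ∀ i : Fin n,
            σ i ∈ (Finset.range (Nat.sqrt n)).image (openedLocker σ (s i)))).card
      ≤ n.factorial := by
    convert hmain using 3
  constructor
  · rw [Nat.le_div_iff_mul_le (Nat.factorial_pos (Nat.sqrt n))]
    rw [mul_comm]
    exact hmain' 
  · rw [div_le_div_iff₀ (by positivity) (by positivity)]
    have := (Nat.cast_le (α := ℝ)).mpr hmain'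
    push_cast at this ⊢
    nlinarith [this]
end

section
/- The sequence t ↦ (t^t · t! / (2t)!) · (4/e)^t of real numbers converges to 1/√2 as t → ∞, where e = exp 1. -/
/-!
By Stirling, `t! ~ √(2πt) (t/e)ᵗ` and `(2t)! ~ √(4πt) (2t/e)^{2t}`, so
`tᵗ t! / (2t)! ~ (e/4)ᵗ / √2`. Exactly: the sequence equals
`stirlingSeq t / stirlingSeq (2t) / √2`, and both Stirling sequences tend to `√π`.
-/

open Filter Topology Real Stirling

theorem tendsto_stirlingSeq_comp_div_stirlingSeq_comp {α : Type*} {l : Filter α} {f g : α → ℕ}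
    (hf : Tendsto f l atTop) (hg : Tendsto g l atTop) :
    Tendsto (fun x => stirlingSeq (f x) / stirlingSeq (g x)) l (𝓝 1) := by
  have hπ : √π ≠ 0 := by positivity
  rw [← div_self hπ]
  exact (tendsto_stirlingSeq_sqrt_pi.comp hf).div (tendsto_stirlingSeq_sqrt_pi.comp hg) hπ

theorem pow_self_mul_factorial_div_factorial_two_mul_eq_stirlingSeq_div {n : ℕ} (hn : n ≠ 0) :
    (n : ℝ) ^ n * n.factorial / (2 * n).factorial * (4 / exp 1) ^ n
      = stirlingSeq n / stirlingSeq (2 * n) / √2 := by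
  have hsqrt : √(2 * (2 * n : ℝ)) = √2 * √(2 * n) :=
    Real.sqrt_mul zero_le_two _
  have hpow : (2 * n / exp 1 : ℝ) ^ (2 * n) = 4 ^ n * (n / exp 1) ^ n * (n / exp 1) ^ n := by
    rw [show (4 : ℝ) = 2 ^ 2 by norm_num, ← pow_mul]
    ring
  simp only [stirlingSeq, Nat.cast_mul, Nat.cast_ofNat, hsqrt, hpow]
  field_simp
  ring

/-- The sequence `t ↦ (tᵗ · t! / (2t)!) · (4/e)ᵗ` of real numbers converges to `1/√2`,
where `e = exp 1`.  (Equivalently, `tᵗ · t!/(2t)!` is asymptotic to `(1/√2)·(e/4)ᵗ`.) -/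
theorem weak_oracle_success_asymptotics :
    Filter.Tendsto
      (fun t : ℕ =>
        (t : ℝ) ^ t * (t.factorial : ℝ) / ((2 * t).factorial : ℝ)
          * (4 / Real.exp 1) ^ t)
      Filter.atTop (nhds (1 / Real.sqrt 2)) := by
  have htwo_mul : Tendsto (fun t : ℕ => 2 * t) atTop atTop :=
    tendsto_id.const_mul_atTop' two_pos
  have hratio := (tendsto_stirlingSeq_comp_div_stirlingSeq_comp tendsto_id htwo_mul).div_const √2
  refine (tendsto_congr' ?_).2 hratio
  filter_upwards [eventually_ne_atTop 0] with t ht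
  exact pow_self_mul_factorial_div_factorial_two_mul_eq_stirlingSeq_div ht
end

section
/- For every natural number t ≥ 1, t^t · t! / (2t)! ≤ (e/4)^t, where e = exp 1. In particular this success probability is exponentially small in t. -/
/-!
Since `log` is increasing, the sum `log (t+1) + ⋯ + log (2t) = log ((2t)! / t!)` dominates
`∫ x in t..2t, log x = t log t + t (2 log 2 - 1)`; exponentiating gives `(2t)! / t! ≥ tᵗ (4/e)ᵗ`.
-/

open Real Finset
open scoped Nat

lemma log_factorial_eq_sum (n : ℕ) :
    log (n ! : ℝ) = ∑ i ∈ range n, log ((i + 1 : ℕ) : ℝ) := by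
  rw [← prod_range_add_one_eq_factorial, Nat.cast_prod, log_prod fun i _ => by positivity]

lemma integral_log_le_log_factorial_sub {n m : ℕ} (hn : 0 < n) (hnm : n ≤ m) :
    ∫ x in (n : ℝ)..m, log x ≤ log (m ! : ℝ) - log (n ! : ℝ) := by
  have hmono : MonotoneOn log (Set.Icc (n : ℝ) m) :=
    strictMonoOn_log.monotoneOn.mono fun x hx => lt_of_lt_of_le (by exact_mod_cast hn) hx.1
  calc ∫ x in (n : ℝ)..m, log x ≤ ∑ i ∈ Ico n m, log ((i + 1 : ℕ) : ℝ) :=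
        hmono.integral_le_sum_Ico hnm
    _ = log (m ! : ℝ) - log (n ! : ℝ) := by
        rw [sum_Ico_eq_sub _ hnm, log_factorial_eq_sum, log_factorial_eq_sum]

/-- For every `t ≥ 1`, `tᵗ · t! / (2t)! ≤ (e/4)ᵗ` where `e = exp 1`; in particular this
success probability is exponentially small in `t`. -/
theorem weak_oracle_success_le (t : ℕ) (ht : 1 ≤ t) :
    (t : ℝ) ^ t * (t.factorial : ℝ) / ((2 * t).factorial : ℝ)
      ≤ (Real.exp 1 / 4) ^ t := by
  have ht_pos : (0 : ℝ) < t := by exact_mod_cast ht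
  have key := integral_log_le_log_factorial_sub ht (by omega : t ≤ 2 * t)
  rw [integral_log, Nat.cast_mul, Nat.cast_ofNat, log_mul two_ne_zero ht_pos.ne'] at key
  rw [← log_le_log_iff (by positivity) (by positivity), log_div (by positivity) (by positivity),
    log_mul (by positivity) (by positivity), log_pow, log_pow,
    log_div (exp_pos 1).ne' four_ne_zero, log_exp, show (4 : ℝ) = 2 ^ 2 by norm_num, log_pow,
    Nat.cast_ofNat]
  linarith
end
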